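/- arXiv:2301.04544 — 5 statements merged into one kernel-verified Lean document; each statement's English description precedes it below -/
import Mathlib

section
/- Let G = (V,E) be a finite loopless directed graph on [n] and P(G) = {v : top(G_v) = v}. Then every vertex v ∈ P(G) satisfies indegree(v, G) ≥ Δ(G) − 1. -/
open Finset

abbrev Edges (n : ℕ) := Finset (Fin n × Fin n)

/-- No self-loops. -/
def Loopless {n : ℕ} (E : Edges n) : Prop := ∀ e ∈ E, e.1 ≠ e.2

/-- Indegree of `v`. -/
def indeg {n : ℕ} (E : Edges n) (v : Fin n) : ℕ :=
  (E.filter (fun e => e.2 = v)).card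

/-- Outdegree of `v`. -/
def outdeg {n : ℕ} (E : Edges n) (v : Fin n) : ℕ :=
  (E.filter (fun e => e.1 = v)).card

/-- Maximum indegree Δ(G). -/
def maxIndeg {n : ℕ} (E : Edges n) : ℕ :=
  Finset.univ.sup (indeg E)

/-- Remove all outgoing edges of `v` (the graph `G_v`). -/
def removeOut {n : ℕ} (E : Edges n) (v : Fin n) : Edges n :=
  E.filter (fun e => e.1 ≠ v)

/-- Lexicographic comparison of pairs (indegree, index). -/
def lexLt {n : ℕ} (E : Edges n) (u v : Fin n) : Prop :=
  indeg E u < indeg E v ∨ (indeg E u = indeg E v ∧ u < v)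

/-- `v` is selected by asymmetric plurality with runners-up: `top(G_v) = v`,
i.e. `v` lex-dominates every other vertex in `G_v`. -/
def selected {n : ℕ} (E : Edges n) (v : Fin n) : Prop :=
  ∀ w, w ≠ v → lexLt (removeOut E v) w v

open Classical in
/-- The selected set `P(G)`. -/
noncomputable def P {n : ℕ} (E : Edges n) : Finset (Fin n) :=
  Finset.univ.filter (fun v => selected E v)

/-- Every selected vertex has indegree at least Δ(G) − 1. -/
theorem stmt_2 {n : ℕ} (E : Edges n) (hE : Loopless E) (v : Fin n)
    (hv : selected E v) : maxIndeg E ≤ indeg E v + 1 := by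
  have hvv : indeg (removeOut E v) v = indeg E v := by
    unfold indeg removeOut
    congr 1
    rw [Finset.filter_filter]
    apply Finset.filter_congr
    intro e he
    constructor
    · rintro ⟨h1, h2⟩; exact h2
    · intro h2; exact ⟨fun h1 => hE e he (h1.trans h2.symm), h2⟩
  apply Finset.sup_le
  intro w _
  by_cases hw : w = v
  · subst hw; omega
  have hlex := hv w hw
  have hwle : indeg (removeOut E v) w ≤ indeg E v := by
    rcases hlex with h | ⟨h, _⟩ <;> omega
  have hdrop : indeg E w ≤ indeg (removeOut E v) w + 1 := by
    unfold indeg removeOut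
    rw [Finset.filter_filter]
    have hsplit : E.filter (fun e => e.2 = w) ⊆
        (E.filter (fun e => e.1 ≠ v ∧ e.2 = w)) ∪ {(v, w)} := by
      intro e he
      simp only [Finset.mem_filter] at he
      by_cases h1 : e.1 = v
      · simp only [Finset.mem_union, Finset.mem_singleton]
        right
        obtain ⟨a, b⟩ := e
        simp_all
      · simp [Finset.mem_union, Finset.mem_filter, he, h1]
    calc (E.filter (fun e => e.2 = w)).card
        ≤ ((E.filter (fun e => e.1 ≠ v ∧ e.2 = w)) ∪ {(v, w)}).card :=
          Finset.card_le_card hsplit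
      _ ≤ (E.filter (fun e => e.1 ≠ v ∧ e.2 = w)).card + 1 :=
          (Finset.card_union_le _ _).trans (by simp)
  omega
end

section
/- Let d ∈ [n−1] and let G = (V,E) be a finite loopless directed graph on [n] in which every vertex has outdegree at most d. Let P(G) = {v : top(G_v) = v}. Then |P(G)| ≤ d + 1. -/
open Finset

lemma indeg_removeOut_self {n : ℕ} (E : Edges n) (hE : Loopless E) (v : Fin n) :
    indeg (removeOut E v) v = indeg E v := by
  unfold indeg removeOut
  rw [Finset.filter_filter]
  congr 1
  apply Finset.filter_congr
  intro e he
  constructor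
  · rintro ⟨_, h⟩; exact h
  · intro h; exact ⟨fun h1 => hE e he (h1.trans h.symm), h⟩

lemma indeg_removeOut_of_not {n : ℕ} (E : Edges n) (v u : Fin n)
    (h : (v, u) ∉ E) : indeg (removeOut E v) u = indeg E u := by
  unfold indeg removeOut
  rw [Finset.filter_filter]
  congr 1
  apply Finset.filter_congr
  intro e he
  constructor
  · rintro ⟨_, h2⟩; exact h2
  · intro h2
    refine ⟨fun h1 => h ?_, h2⟩
    rw [← h1, ← h2]
    exact he

/-- If all outdegrees are at most d, then at most d+1 vertices are selected. -/
theorem stmt_3 {n d : ℕ} (hd1 : 1 ≤ d) (hd2 : d ≤ n - 1)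
    (E : Edges n) (hE : Loopless E)
    (hout : ∀ v : Fin n, outdeg E v ≤ d) :
    (P E).card ≤ d + 1 := by
  rcases (P E).eq_empty_or_nonempty with h | h
  · simp [h]
  · obtain ⟨v, hv, hmin⟩ := Finset.exists_min_image (P E)
      (fun v => n * indeg E v + v.val) h
    have hvsel : selected E v := by
      simpa [P] using hv
    have hsub : (P E).erase v ⊆ (E.filter (fun e => e.1 = v)).image Prod.snd := by
      intro u hu
      obtain ⟨hune, huP⟩ := Finset.mem_erase.mp hu
      by_contra hcon
      have hvu : (v, u) ∉ E := by
        intro hin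
        exact hcon (Finset.mem_image.mpr ⟨(v, u), Finset.mem_filter.mpr ⟨hin, rfl⟩, rfl⟩)
      have hlex := hvsel u hune
      rw [lexLt, indeg_removeOut_of_not E v u hvu, indeg_removeOut_self E hE v] at hlex
      have hkey := hmin u huP
      have hu_lt : u.val < n := u.isLt
      have hv_lt : v.val < n := v.isLt
      rcases hlex with h1 | ⟨h1, h2⟩
      · -- indeg E u < indeg E v, but key v ≤ key u
        nlinarith [Nat.mul_le_mul_left n (Nat.succ_le_of_lt h1)]
      · -- indeg E u = indeg E v and u < v
        rw [h1] at hkey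
        have : u.val < v.val := h2
        omega
    have h1 : ((P E).erase v).card ≤ (E.filter (fun e => e.1 = v)).card :=
      le_trans (Finset.card_le_card hsub) Finset.card_image_le
    have h2 : ((P E).erase v).card = (P E).card - 1 := Finset.card_erase_of_mem hv
    have h3 := hout v
    rw [outdeg] at h3
    have hpos : 1 ≤ (P E).card := Finset.card_pos.mpr h
    omega
end

section
/- Let G = (V,E) be a loopless directed graph on [n] and P(G) = {v : top(G_v) = v}. If u, v ∈ P(G) and (indegree(u), u) < (indegree(v), v) lexicographically, then (u, v) ∈ E. In particular, the vertex of P(G) with lexicographically minimal pair (indegree, index) has an outgoing edge to every other vertex of P(G). -/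
open Finset

lemma indeg_removeOut_aux {n : ℕ} (E : Edges n) (u v : Fin n)
    (h : (u, v) ∉ E) : indeg (removeOut E u) v = indeg E v := by
  unfold indeg removeOut
  rw [Finset.filter_filter]
  apply congrArg
  apply Finset.filter_congr
  intro e he
  constructor
  · exact fun h2 => h2.2
  · intro h2
    refine ⟨fun h1 => ?_, h2⟩
    apply h
    have : e = (u, v) := Prod.ext h1 h2
    rwa [this] at he

/-- Lex-smaller selected vertices point to lex-greater selected vertices; in
particular the lex-minimal selected vertex has an edge to every other
selected vertex. -/
theorem stmt_5 {n : ℕ} (E : Edges n) (hE : Loopless E) :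
    (∀ u v : Fin n, selected E u → selected E v → lexLt E u v → (u, v) ∈ E) ∧
    (∀ u : Fin n, selected E u →
      (∀ w : Fin n, selected E w → ¬ lexLt E w u) →
      ∀ v : Fin n, selected E v → v ≠ u → (u, v) ∈ E) := by
  have key : ∀ u v : Fin n, selected E u → lexLt E u v → (u, v) ∈ E := by
    intro u v hu hlex
    by_contra hne
    have huv : u ≠ v := by
      rintro rfl
      rcases hlex with h | ⟨_, h⟩
      · exact lt_irrefl _ h
      · exact lt_irrefl _ h
    have h1 := hu v (Ne.symm huv)
    have e1 : indeg (removeOut E u) v = indeg E v := indeg_removeOut_aux E u v hne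
    have e2 : indeg (removeOut E u) u = indeg E u :=
      indeg_removeOut_aux E u u (fun h => hE _ h rfl)
    unfold lexLt at h1 hlex
    rw [e1, e2] at h1
    rcases hlex with h | ⟨heq, hlt⟩ <;> rcases h1 with h' | ⟨heq', hlt'⟩
    · omega
    · omega
    · omega
    · exact lt_asymm hlt hlt'
  constructor
  · intro u v hu _ hlex
    exact key u v hu hlex
  · intro u hu hmin v hv hvu
    apply key u v hu
    have hnlex := hmin v hv
    unfold lexLt at hnlex ⊢
    push_neg at hnlex
    rcases lt_trichotomy (indeg E u) (indeg E v) with h | h | h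
    · exact Or.inl h
    · refine Or.inr ⟨h, ?_⟩
      rcases lt_trichotomy u v with h' | h' | h'
      · exact h'
      · exact absurd h' hvu.symm
      · exact absurd h' (not_lt.mpr (hnlex.2 h.symm))
    · exact absurd h (not_lt.mpr hnlex.1)
end

section
/- Let G = (V,E) be a loopless directed graph on [n] and P(G) = {v : top(G_v) = v}. Then every vertex of P(G) with indegree equal to Δ(G) − 1 has index strictly greater than every vertex with indegree Δ(G). Consequently, if S^0 and S^1 denote the vertices of P(G) with indegree Δ(G) and Δ(G)−1 respectively, then max S^0 < min S^1 whenever both sets are nonempty. -/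
open Finset

lemma indeg_removeOut_ge {n : ℕ} (E : Edges n) (v w : Fin n) :
    indeg E w ≤ indeg (removeOut E v) w + 1 := by
  unfold indeg removeOut
  rw [Finset.filter_filter]
  have hsplit := Finset.card_filter_add_card_filter_not
    (s := E.filter (fun e => e.2 = w)) (p := fun e => e.1 ≠ v)
  rw [Finset.filter_filter, Finset.filter_filter] at hsplit
  have hsub : (E.filter (fun e => e.2 = w ∧ ¬ e.1 ≠ v)) ⊆ {(v, w)} := by
    intro e he
    simp only [Finset.mem_filter, not_not] at he
    simp only [Finset.mem_singleton]
    obtain ⟨_, h2, h1⟩ := he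
    exact Prod.ext h1 h2
  have hle : (E.filter (fun e => e.2 = w ∧ ¬ e.1 ≠ v)).card ≤ 1 := by
    simpa using Finset.card_le_card hsub
  have : ((E.filter fun e => e.2 = w ∧ e.1 ≠ v).card)
      + (E.filter fun e => e.2 = w ∧ ¬ e.1 ≠ v).card = (E.filter fun e => e.2 = w).card := hsplit
  have hcomm : (E.filter fun e => e.1 ≠ v ∧ e.2 = w) = (E.filter fun e => e.2 = w ∧ e.1 ≠ v) := by
    apply Finset.filter_congr; intro e _; simp [and_comm]
  rw [hcomm]
  omega

/-- Selected vertices of indegree Δ−1 have index greater than every vertex of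
indegree Δ; hence max S⁰ < min S¹. -/
theorem stmt_6 {n : ℕ} (E : Edges n) (hE : Loopless E) :
    (∀ v : Fin n, selected E v → indeg E v + 1 = maxIndeg E →
      ∀ w : Fin n, indeg E w = maxIndeg E → w < v) ∧
    (∀ u v : Fin n, selected E u → selected E v →
      indeg E u = maxIndeg E → indeg E v + 1 = maxIndeg E → u < v) := by
  have key : ∀ v : Fin n, selected E v → indeg E v + 1 = maxIndeg E →
      ∀ w : Fin n, indeg E w = maxIndeg E → w < v := by
    intro v hsel hv w hw
    have hne : w ≠ v := by
      intro h; rw [h] at hw; omega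
    have hlex := hsel w hne
    have h1 : indeg (removeOut E v) v = indeg E v := indeg_removeOut_self E hE v
    have h2 : indeg E w ≤ indeg (removeOut E v) w + 1 := indeg_removeOut_ge E v w
    rcases hlex with h | ⟨_, h⟩
    · omega
    · exact h
  refine ⟨key, ?_⟩
  intro u v hu hv hiu hiv
  exact key v hv hiv u hiu
end

section
/- Let n ≥ 3 and let f be an impartial selection mechanism mapping loopless directed graphs on [n] to nonempty subsets of [n]. Then f cannot select only vertices of maximum indegree in every graph: there exists a graph G on [n] and a vertex v ∈ f(G) with indegree(v, G) < Δ(G), or f(G) is empty for some G. -/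
open Finset

lemma key {n : ℕ} (f : Edges n → Finset (Fin n))
    (himp : ∀ E E' : Edges n, ∀ v : Fin n,
      Loopless E → Loopless E' →
      removeOut E v = removeOut E' v → (v ∈ f E ↔ v ∈ f E'))
    (a b c : Fin n) (hab : a ≠ b) (hbc : b ≠ c) (hca : c ≠ a)
    (hb : b ∈ f ({(a,b),(b,c),(c,a)} : Edges n)) :
    ∃ E : Edges n, Loopless E ∧
      (f E = ∅ ∨ ∃ v ∈ f E, indeg E v < maxIndeg E) := by
  set C : Edges n := {(a,b),(b,c),(c,a)} with hC
  set D : Edges n := {(a,b),(c,a),(b,a)} with hD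
  have hLC : Loopless C := by
    intro e he
    simp only [hC, mem_insert, mem_singleton] at he
    rcases he with rfl|rfl|rfl <;> simpa using by first | exact hab | exact hbc | exact hca
  have hLD : Loopless D := by
    intro e he
    simp only [hD, mem_insert, mem_singleton] at he
    rcases he with rfl|rfl|rfl <;> simp_all <;> omega
  have hrem : removeOut C b = removeOut D b := by
    simp [removeOut, hC, hD, filter_insert, filter_singleton, hab, hbc.symm, hab.symm]
  have hmem : b ∈ f D := (himp C D b hLC hLD hrem).mp hb
  refine ⟨D, hLD, Or.inr ⟨b, hmem, ?_⟩⟩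
  have h1 : indeg D b = 1 := by
    simp [indeg, hD, filter_insert, filter_singleton, hab, hbc, hca, hab.symm, hbc.symm, hca.symm]
  have h2 : indeg D a = 2 := by
    have : (c,a) ≠ (b,a) := by simp [hbc.symm]
    simp [indeg, hD, filter_insert, filter_singleton, hab, hbc, hca, hab.symm, hbc.symm, hca.symm, this]
  have h3 : indeg D a ≤ maxIndeg D := Finset.le_sup (mem_univ a)
  omega

set_option maxHeartbeats 1000000 in
/-- No impartial mechanism is 0-min-additive on all loopless digraphs on [n]
for n ≥ 3: some graph has an empty selection or a selected vertex of
non-maximum indegree. -/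
theorem stmt_9 {n : ℕ} (hn : 3 ≤ n) (f : Edges n → Finset (Fin n))
    (himp : ∀ E E' : Edges n, ∀ v : Fin n,
      Loopless E → Loopless E' →
      removeOut E v = removeOut E' v → (v ∈ f E ↔ v ∈ f E')) :
    ∃ E : Edges n, Loopless E ∧
      (f E = ∅ ∨ ∃ v ∈ f E, indeg E v < maxIndeg E) := by
  set a : Fin n := ⟨0, by omega⟩ with ha
  set b : Fin n := ⟨1, by omega⟩ with hb
  set c : Fin n := ⟨2, by omega⟩ with hc
  have hab : a ≠ b := by simp [ha, hb, Fin.ext_iff]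
  have hbc : b ≠ c := by simp [hb, hc, Fin.ext_iff]
  have hca : c ≠ a := by simp [hc, ha, Fin.ext_iff]
  set C : Edges n := {(a,b),(b,c),(c,a)} with hC
  have hLC : Loopless C := by
    intro e he
    simp only [hC, mem_insert, mem_singleton] at he
    rcases he with rfl|rfl|rfl <;> simpa using by first | exact hab | exact hbc | exact hca
  by_cases hne : f C = ∅
  · exact ⟨C, hLC, Or.inl hne⟩
  obtain ⟨v, hv⟩ := Finset.nonempty_iff_ne_empty.mpr hne
  by_cases hlt : indeg C v < maxIndeg C
  · exact ⟨C, hLC, Or.inr ⟨v, hv, hlt⟩⟩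
  have hib : indeg C b = 1 := by
    simp [indeg, hC, filter_insert, filter_singleton, hab, hbc, hca, hab.symm, hbc.symm, hca.symm]
  have hmax : 1 ≤ maxIndeg C := hib ▸ Finset.le_sup (mem_univ b)
  have hpos : 0 < indeg C v := by omega
  rw [indeg, Finset.card_pos] at hpos
  obtain ⟨e, he⟩ := hpos
  simp only [mem_filter, hC, mem_insert, mem_singleton] at he
  obtain ⟨h1, h2⟩ := he
  have hvabc : v = b ∨ v = c ∨ v = a := by
    rcases h1 with rfl|rfl|rfl <;> simp_all
  rcases hvabc with rfl|rfl|rfl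
  · exact key f himp a b c hab hbc hca hv
  · have hCeq : ({(b,c),(c,a),(a,b)} : Edges n) = C := by
      ext x
      simp only [hC, mem_insert, mem_singleton]
      tauto
    exact key f himp b c a hbc hca hab (by rw [hCeq]; exact hv)
  · have hCeq : ({(c,a),(a,b),(b,c)} : Edges n) = C := by
      ext x
      simp only [hC, mem_insert, mem_singleton]
      tauto
    exact key f himp c a b hca hab hbc (by rw [hCeq]; exact hv)
end
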